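/- Let d ≥ 1 and N ≥ 2. Let m_ν (resp. m_α) denote the multiplicities of irreducible representations in the decomposition of the permutation action of S(N) on (ℂ^d)^{⊗N} (resp. of S(N-1) on (ℂ^d)^{⊗(N-1)}). Then ∑_{ν ⊢ N, height(ν) ≤ d} m_ν² = ((d² + N - 1)/N) · ∑_{α ⊢ N-1, height(α) ≤ d} m_α². -/

import Mathlib

/-!
Schur orthogonality turns a decomposition `χ = ∑ mᵢ χᵢ` into distinct irreducible characters into
`∑_g χ(g) χ(g⁻¹) = |G| ∑ mᵢ²`; for `χ(σ) = d ^ l(σ)` this reads `N! ∑ m_ν² = ∑_σ (d²) ^ l(σ)`.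
Writing `σ ∈ S(n+1)` as `(σ 0, τ)` with `τ ∈ S(n)` via `decomposeFin`, `σ` has one cycle more
than `τ` when `σ 0 = 0` and as many otherwise, so `∑_σ x ^ l(σ) = (x + n) ∑_τ x ^ l(τ)`.
Comparing the identities for `N` and `N - 1` gives the factor `(d² + N - 1) / N`.
-/

open CategoryTheory

/-- Number of cycles of a permutation, counting fixed points as 1-cycles. -/
def cycleCount {α : Type*} [Fintype α] [DecidableEq α] (σ : Equiv.Perm α) : ℕ :=
  σ.cycleType.card + (Fintype.card α - σ.support.card)

open Equiv Equiv.Perm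

section CycleCount

variable {α : Type*} [Fintype α] [DecidableEq α]

theorem cycleCount_inv (σ : Perm α) : cycleCount σ⁻¹ = cycleCount σ := by
  rw [cycleCount, cycleCount, cycleType_inv, support_inv]

theorem cycleCount_one : cycleCount (1 : Perm α) = Fintype.card α := by
  simp [cycleCount]

theorem cycleCount_mul_of_disjoint {σ τ : Perm α} (h : σ.Disjoint τ) :
    cycleCount (σ * τ) + Fintype.card α = cycleCount σ + cycleCount τ := by
  have : (σ * τ).support.card ≤ Fintype.card α := Finset.card_le_univ _
  rw [h.card_support_mul] at this
  simp only [cycleCount, h.cycleType_mul, Multiset.card_add, h.card_support_mul]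
  omega

theorem cycleCount_add_card_support_of_isCycle {c : Perm α} (hc : c.IsCycle) :
    cycleCount c + c.support.card = Fintype.card α + 1 := by
  have := c.support.card_le_univ
  rw [cycleCount, hc.cycleType, Multiset.card_singleton]
  omega

theorem cycleCount_swap_mul_self_of_isCycle {c : Perm α} (hc : c.IsCycle) {x : α}
    (hx : c x ≠ x) :
    cycleCount (swap x (c x) * c) = cycleCount c + 1 := by
  have hcount := cycleCount_add_card_support_of_isCycle hc
  by_cases hcc : c (c x) = x
  · have hc_eq : c = swap x (c x) := hc.eq_swap_of_apply_apply_eq_self hx hcc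
    have h2 : c.support.card = 2 := by rw [hc_eq]; exact card_support_swap (Ne.symm hx)
    have h1 : swap x (c x) * c = 1 := by nth_rw 2 [hc_eq]; exact swap_mul_self _ _
    rw [h1, cycleCount_one]
    omega
  · have hcount' := cycleCount_add_card_support_of_isCycle (hc.swap_mul hx hcc)
    have hx_mem : x ∈ c.support := mem_support.2 hx
    rw [support_swap_mul_eq c x hcc, Finset.card_sdiff_of_subset (by simpa using hx_mem)] at hcount'
    have := c.support.card_pos.2 ⟨x, hx_mem⟩
    rw [Finset.card_singleton] at hcount'
    omega

/-- Splitting off the transposition `(x f(x))` cuts `x` out of its cycle. -/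
theorem cycleCount_swap_mul_self {f : Perm α} {x : α} (hx : f x ≠ x) :
    cycleCount (swap x (f x) * f) = cycleCount f + 1 := by
  set c := f.cycleOf x
  have hc : c.IsCycle := f.isCycle_cycleOf hx
  have hcx : c x = f x := f.cycleOf_apply_self x
  have hdisj : (f * c⁻¹).Disjoint c := disjoint_mul_inv_of_mem_cycleFactorsFinset
    (cycleOf_mem_cycleFactorsFinset_iff.2 (mem_support.2 hx))
  have hdisj' : (swap x (c x) * c).Disjoint (f * c⁻¹) :=
    (hdisj.mono le_rfl fun z hz => (mem_support_swap_mul_imp_mem_support_ne hz).1).symm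
  have hf : f = c * (f * c⁻¹) := by rw [← hdisj.commute.eq]; group
  have h₁ := cycleCount_mul_of_disjoint hdisj.symm
  have h₂ := cycleCount_mul_of_disjoint hdisj'
  have h₃ := cycleCount_swap_mul_self_of_isCycle hc (hcx ▸ hx)
  rw [← hf] at h₁
  rw [mul_assoc, ← hf] at h₂
  rw [← hcx]
  omega

end CycleCount

section DecomposeFin

variable {n : ℕ}

theorem decomposeFin_symm_zero (e : Perm (Fin n)) :
    decomposeFin.symm (0, e) = e.extendDomain (finSuccAboveEquiv 0) := by
  ext i
  cases i using Fin.cases with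
  | zero => simp [extendDomain_apply_not_subtype]
  | succ j =>
    have hj : (finSuccAboveEquiv 0).symm ⟨j.succ, Fin.succ_ne_zero j⟩ = j := by
      simp [Equiv.symm_apply_eq, finSuccAboveEquiv_apply]
    rw [decomposeFin_symm_apply_succ,
      extendDomain_apply_subtype (b := j.succ) _ _ (Fin.succ_ne_zero j), hj]
    simp [finSuccAboveEquiv_apply]

theorem decomposeFin_symm_eq_swap_mul (p : Fin (n + 1)) (e : Perm (Fin n)) :
    decomposeFin.symm (p, e) = swap 0 p * decomposeFin.symm (0, e) := by
  ext i
  cases i using Fin.cases <;> simp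

theorem cycleCount_decomposeFin_symm_zero (e : Perm (Fin n)) :
    cycleCount (decomposeFin.symm (0, e)) = cycleCount e + 1 := by
  have hct : (decomposeFin.symm (0, e)).cycleType = e.cycleType := by
    rw [decomposeFin_symm_zero, cycleType_extendDomain]
  have hsupp : (decomposeFin.symm (0, e)).support.card = e.support.card := by
    rw [← sum_cycleType, hct, sum_cycleType]
  have hle : e.support.card ≤ n := by simpa using e.support.card_le_univ
  simp only [cycleCount, hct, hsupp, Fintype.card_fin]
  omega

theorem cycleCount_decomposeFin_symm_succ (i : Fin n) (e : Perm (Fin n)) :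
    cycleCount (decomposeFin.symm (i.succ, e)) = cycleCount e := by
  have h := cycleCount_swap_mul_self (f := decomposeFin.symm (i.succ, e)) (x := 0)
    (by rw [decomposeFin_symm_apply_zero]; exact Fin.succ_ne_zero i)
  have hσ : swap 0 i.succ * decomposeFin.symm (i.succ, e) = decomposeFin.symm (0, e) := by
    rw [decomposeFin_symm_eq_swap_mul, swap_mul_self_mul]
  rw [decomposeFin_symm_apply_zero, hσ, cycleCount_decomposeFin_symm_zero] at h
  omega

end DecomposeFin

theorem sum_pow_cycleCount_succ {R : Type*} [CommSemiring R] (x : R) (n : ℕ) :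
    ∑ σ : Perm (Fin (n + 1)), x ^ cycleCount σ =
      (x + n) * ∑ τ : Perm (Fin n), x ^ cycleCount τ := by
  simp only [Finset.univ_perm_fin_succ, Finset.sum_map, Fintype.sum_prod_type, Fin.sum_univ_succ,
    toEmbedding_apply, cycleCount_decomposeFin_symm_zero, cycleCount_decomposeFin_symm_succ,
    Finset.sum_const, Finset.card_univ, Fintype.card_fin, nsmul_eq_mul, pow_succ, ← Finset.sum_mul,
    add_mul]
  ring

namespace FDRep

variable {k G : Type} [Field k] [IsAlgClosed k] [Group G] [Fintype G] [Invertible (Nat.card G : k)]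
  {ι : Type} [DecidableEq ι] {W : ι → FDRep k G} [∀ i, Simple (W i)]

theorem sum_character_mul_character_inv_eq_ite
    (hW : Pairwise fun i j => ¬Nonempty (W i ≅ W j)) (i j : ι) :
    ∑ g : G, (W i).character g * (W j).character g⁻¹ = if i = j then (Nat.card G : k) else 0 := by
  rw [← mul_inv_cancel_left₀ (Invertible.ne_zero (Nat.card G : k)) (∑ g : G, _), char_orthonormal]
  by_cases hij : i = j
  · subst hij; simp [Nonempty.intro (Iso.refl (W i))]
  · simp [hij, hW hij]

theorem sum_mul_inv_eq_card_mul_sum_sq [Fintype ι]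
    (hW : Pairwise fun i j => ¬Nonempty (W i ≅ W j)) (m : ι → k) {χ : G → k}
    (hχ : ∀ g, χ g = ∑ i, m i * (W i).character g) :
    ∑ g, χ g * χ g⁻¹ = Nat.card G * ∑ i, m i ^ 2 := by
  calc ∑ g, χ g * χ g⁻¹
      = ∑ g, ∑ i, ∑ j, m i * m j * ((W i).character g * (W j).character g⁻¹) :=
        Finset.sum_congr rfl fun g _ => by
          rw [hχ, hχ, Finset.sum_mul_sum]
          exact Finset.sum_congr rfl fun i _ => Finset.sum_congr rfl fun j _ => by ring
    _ = ∑ i, ∑ j, m i * m j * ∑ g, (W i).character g * (W j).character g⁻¹ := by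
        rw [Finset.sum_comm]
        refine Finset.sum_congr rfl fun i _ => ?_
        rw [Finset.sum_comm]
        simp only [Finset.mul_sum]
    _ = Nat.card G * ∑ i, m i ^ 2 := by
        simp [sum_character_mul_character_inv_eq_ite hW, Finset.mul_sum, sq, mul_comm]

end FDRep

theorem factorial_mul_sum_sq_eq_sum_pow_cycleCount {n : ℕ} {ι : Type} [Fintype ι]
    [DecidableEq ι] {W : ι → FDRep ℂ (Perm (Fin n))} [∀ i, Simple (W i)]
    (hW : Pairwise fun i j => ¬Nonempty (W i ≅ W j)) (m : ι → ℂ) (x : ℂ)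
    (hx : ∀ σ : Perm (Fin n), x ^ cycleCount σ = ∑ i, m i * (W i).character σ) :
    (n.factorial : ℂ) * ∑ i, m i ^ 2 = ∑ σ : Perm (Fin n), (x ^ 2) ^ cycleCount σ := by
  have hcard : Nat.card (Perm (Fin n)) = n.factorial := by rw [Nat.card_perm, Nat.card_fin]
  have : Invertible (Nat.card (Perm (Fin n)) : ℂ) := invertibleOfNonzero (by simp)
  rw [← hcard, ← FDRep.sum_mul_inv_eq_card_mul_sum_sq hW m hx]
  simp only [cycleCount_inv, ← pow_add, ← pow_mul, two_mul]

theorem stmt5_general (d N : ℕ) (hN : 2 ≤ N)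
    {ι : Type} [Fintype ι] (W : ι → FDRep ℂ (Equiv.Perm (Fin N)))
    [∀ i, Simple (W i)] (hdist : ∀ i j, i ≠ j → ¬Nonempty (W i ≅ W j))
    (m : ι → ℕ) (V : FDRep ℂ (Equiv.Perm (Fin N)))
    (hchar : ∀ σ : Equiv.Perm (Fin N), V.character σ = (d : ℂ) ^ cycleCount σ)
    (hdecomp : ∀ σ : Equiv.Perm (Fin N),
      V.character σ = ∑ i, (m i : ℂ) * (W i).character σ)
    {κ : Type} [Fintype κ] (W' : κ → FDRep ℂ (Equiv.Perm (Fin (N - 1))))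
    [∀ j, Simple (W' j)] (hdist' : ∀ i j, i ≠ j → ¬Nonempty (W' i ≅ W' j))
    (m' : κ → ℕ) (V' : FDRep ℂ (Equiv.Perm (Fin (N - 1))))
    (hchar' : ∀ π : Equiv.Perm (Fin (N - 1)), V'.character π = (d : ℂ) ^ cycleCount π)
    (hdecomp' : ∀ π : Equiv.Perm (Fin (N - 1)),
      V'.character π = ∑ j, (m' j : ℂ) * (W' j).character π) :
    (∑ i, ((m i : ℂ)) ^ 2)
      = (((d : ℂ) ^ 2 + N - 1) / N) * ∑ j, ((m' j : ℂ)) ^ 2 := by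
  classical
  obtain ⟨n, rfl⟩ : ∃ n, N = n + 1 := ⟨N - 1, by omega⟩
  have hA := factorial_mul_sum_sq_eq_sum_pow_cycleCount hdist (m ·) d
    fun σ => (hchar σ).symm.trans (hdecomp σ)
  -- the type ascription makes `Fin (n + 1 - 1)` unfold to `Fin n`
  have hB : (n.factorial : ℂ) * ∑ j, (m' j : ℂ) ^ 2 =
      ∑ π : Perm (Fin n), ((d : ℂ) ^ 2) ^ cycleCount π :=
    factorial_mul_sum_sq_eq_sum_pow_cycleCount hdist' (m' ·) d
      fun π => (hchar' π).symm.trans (hdecomp' π)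
  rw [sum_pow_cycleCount_succ, ← hB, Nat.factorial_succ, Nat.cast_mul] at hA
  have hfac : (n.factorial : ℂ) ≠ 0 := Nat.cast_ne_zero.2 n.factorial_ne_zero
  rw [div_mul_eq_mul_div, eq_div_iff (Nat.cast_ne_zero.2 (Nat.succ_ne_zero n))]
  apply mul_left_cancel₀ hfac
  push_cast at hA ⊢
  linear_combination hA

/-- If `V` (resp. `V'`) is the permutation representation of `S(N)` on `(ℂ^d)^{⊗N}`
(resp. of `S(N-1)` on `(ℂ^d)^{⊗(N-1)}`), characterized by character `σ ↦ d^{l(σ)}`, with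
decompositions into pairwise non-isomorphic irreducibles with multiplicities `m` (resp. `m'`),
then `∑ m_ν² = ((d² + N - 1)/N) · ∑ m'_α²`. -/
theorem stmt5 (d N : ℕ) (hd : 1 ≤ d) (hN : 2 ≤ N)
    {ι : Type} [Fintype ι] (W : ι → FDRep ℂ (Equiv.Perm (Fin N)))
    [∀ i, Simple (W i)] (hdist : ∀ i j, i ≠ j → ¬Nonempty (W i ≅ W j))
    (m : ι → ℕ) (V : FDRep ℂ (Equiv.Perm (Fin N)))
    (hchar : ∀ σ : Equiv.Perm (Fin N), V.character σ = (d : ℂ) ^ cycleCount σ)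
    (hdecomp : ∀ σ : Equiv.Perm (Fin N),
      V.character σ = ∑ i, (m i : ℂ) * (W i).character σ)
    {κ : Type} [Fintype κ] (W' : κ → FDRep ℂ (Equiv.Perm (Fin (N - 1))))
    [∀ j, Simple (W' j)] (hdist' : ∀ i j, i ≠ j → ¬Nonempty (W' i ≅ W' j))
    (m' : κ → ℕ) (V' : FDRep ℂ (Equiv.Perm (Fin (N - 1))))
    (hchar' : ∀ π : Equiv.Perm (Fin (N - 1)), V'.character π = (d : ℂ) ^ cycleCount π)
    (hdecomp' : ∀ π : Equiv.Perm (Fin (N - 1)),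
      V'.character π = ∑ j, (m' j : ℂ) * (W' j).character π) :
    (∑ i, ((m i : ℂ)) ^ 2)
      = (((d : ℂ) ^ 2 + N - 1) / N) * ∑ j, ((m' j : ℂ)) ^ 2 :=
  stmt5_general d N hN W hdist m V hchar hdecomp W' hdist' m' V' hchar' hdecomp'
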